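/- arXiv:1111.2833 — 2 statements merged into one kernel-verified Lean document; each statement's English description precedes it below -/
import Mathlib

section
/- Let 𝔓 be a polymorphism from (A,α) to (B,β), i.e. a measure on A × B × ℝ₊ˣ whose projection to A equals α and such that the projection of t·𝔓 to B equals β. Then for u = v + iw with 0 ≤ v ≤ 1, the bilinear form S_u(𝔓; f, g) = ∭ f(a) g(b) t^{v+iw} d𝔓(a,b,t) satisfies |S_u(𝔓; f, g)| ≤ ‖f‖_{L^{1/(1-v)}(A)} · ‖g‖_{L^{1/v}(B)}. -/
open MeasureTheory Set ENNReal

noncomputable section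

/-- A polymorphism from `(A, α)` to `(B, β)`: a measure `P` on `A × B × ℝ₊ˣ`
(realized on `A × B × ℝ`, supported where the last coordinate `t` is positive)
whose projection to `A` is `α`, and such that the projection of `t·P` to `B` is `β`. -/
def IsPolymorphism {A B : Type*} [MeasurableSpace A] [MeasurableSpace B]
    (α : Measure A) (β : Measure B) (P : Measure (A × B × ℝ)) : Prop :=
  P.map (fun x => x.1) = α ∧
  (P.withDensity (fun x => ENNReal.ofReal x.2.2)).map (fun x => x.2.1) = β ∧
  P {x | x.2.2 ≤ 0} = 0

/-- The bilinear form `S_u(P; f, g) = ∭ f(a) g(b) t^u dP(a,b,t)`. -/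
def polyForm {A B : Type*} [MeasurableSpace A] [MeasurableSpace B]
    (P : Measure (A × B × ℝ)) (u : ℂ) (f : A → ℂ) (g : B → ℂ) : ℂ :=
  ∫ x, f x.1 * g x.2.1 * (x.2.2 : ℂ) ^ u ∂P

/-!
Write the integrand as `f(a) · (g(b) t^u)` and apply Hölder's inequality on `P` with the
conjugate exponents `1/(1-v)` and `1/v`. The first factor has the same `L^{1/(1-v)}` norm on `P`
as `f` on `α`, since `α` is the image of `P` under `(a, b, t) ↦ a`. Since `|t^u| = t^v`, the
`1/v`-th power of the `L^{1/v}` norm of the second factor is `∫ |g(b)|^{1/v} t dP`, that is, the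
`1/v`-th power of the norm of `g` in `L^{1/v}(β)`, because `β` is the image of `t·P`. At `v = 0`
the exponent is `∞`, and the essential suprema for `P` and `t·P` agree because `t > 0` `P`-a.e.
-/

namespace MeasureTheory

theorem eLpNorm_inv_ofReal_eq_eLpNorm_withDensity {X E F : Type*} [MeasurableSpace X]
    [NormedAddCommGroup E] [NormedAddCommGroup F] {μ : Measure X} {ρ : X → ℝ≥0∞}
    {G : X → E} {H : X → F} {v : ℝ} (hv : 0 ≤ v) (hρ : AEMeasurable ρ μ)
    (hρ0 : ∀ᵐ x ∂μ, ρ x ≠ 0) (hG : AEStronglyMeasurable G (μ.withDensity ρ))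
    (hH : ∀ᵐ x ∂μ, ‖H x‖ₑ = ‖G x‖ₑ * ρ x ^ v) :
    eLpNorm H (ENNReal.ofReal v)⁻¹ μ = eLpNorm G (ENNReal.ofReal v)⁻¹ (μ.withDensity ρ) := by
  rcases hv.eq_or_lt with rfl | hv
  · have hHG : eLpNorm H ∞ μ = eLpNorm G ∞ μ :=
      eLpNorm_congr_enorm_ae (by simpa using hH)
    simp only [ENNReal.ofReal_zero, ENNReal.inv_zero, hHG, eLpNorm_exponent_top]
    exact le_antisymm
      (eLpNormEssSup_mono_measure G (withDensity_absolutelyContinuous' hρ hρ0))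
      (eLpNormEssSup_mono_measure G (withDensity_absolutelyContinuous μ ρ))
  have hq0 : (ENNReal.ofReal v)⁻¹ ≠ 0 := by simp
  have hqtop : (ENNReal.ofReal v)⁻¹ ≠ ∞ := by simpa using hv
  simp only [eLpNorm_eq_lintegral_rpow_enorm_toReal hq0 hqtop, ENNReal.toReal_inv,
    ENNReal.toReal_ofReal hv.le, one_div, inv_inv]
  rw [lintegral_withDensity_eq_lintegral_mul₀' hρ (hG.enorm.pow_const _)]
  congr 1
  refine lintegral_congr_ae (hH.mono fun x hx => ?_)
  show ‖H x‖ₑ ^ v⁻¹ = ρ x * ‖G x‖ₑ ^ v⁻¹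
  rw [hx, ENNReal.mul_rpow_of_nonneg _ _ (inv_nonneg.2 hv.le), ← ENNReal.rpow_mul,
    mul_inv_cancel₀ hv.ne', ENNReal.rpow_one, mul_comm]

end MeasureTheory

theorem ENNReal.holderConjugate_inv_ofReal_one_sub {v : ℝ} (hv0 : 0 ≤ v) (hv1 : v ≤ 1) :
    HolderConjugate (ENNReal.ofReal (1 - v))⁻¹ (ENNReal.ofReal v)⁻¹ :=
  holderConjugate_iff.2 <| by
    rw [inv_inv, inv_inv, ← ENNReal.ofReal_add (by linarith) hv0, sub_add_cancel, ofReal_one]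

namespace IsPolymorphism

variable {A B E : Type*} [MeasurableSpace A] [MeasurableSpace B] [NormedAddCommGroup E]
  {α : Measure A} {β : Measure B} {P : Measure (A × B × ℝ)}

theorem ae_pos (hP : IsPolymorphism α β P) : ∀ᵐ x ∂P, 0 < x.2.2 := by
  simpa only [ae_iff, not_lt] using hP.2.2

theorem absolutelyContinuous_withDensity (hP : IsPolymorphism α β P) :
    P ≪ P.withDensity fun x => ENNReal.ofReal x.2.2 :=
  withDensity_absolutelyContinuous' (by fun_prop) <|
    hP.ae_pos.mono fun _ hx => (ENNReal.ofReal_pos.2 hx).ne'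

theorem aestronglyMeasurable_comp_fst (hP : IsPolymorphism α β P) {f : A → E}
    (hf : AEStronglyMeasurable f α) : AEStronglyMeasurable (fun x => f x.1) P := by
  obtain ⟨rfl, -⟩ := hP
  exact hf.comp_aemeasurable measurable_fst.aemeasurable

theorem eLpNorm_comp_fst (hP : IsPolymorphism α β P) {f : A → E}
    (hf : AEStronglyMeasurable f α) (p : ℝ≥0∞) : eLpNorm (fun x => f x.1) p P = eLpNorm f p α := by
  obtain ⟨rfl, -⟩ := hP
  exact (eLpNorm_map_measure hf measurable_fst.aemeasurable).symm

theorem aestronglyMeasurable_comp_snd_fst (hP : IsPolymorphism α β P) {g : B → E}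
    (hg : AEStronglyMeasurable g β) :
    AEStronglyMeasurable (fun x => g x.2.1) (P.withDensity fun x => ENNReal.ofReal x.2.2) := by
  obtain ⟨-, rfl, -⟩ := hP
  exact hg.comp_aemeasurable (by fun_prop)

theorem eLpNorm_comp_snd_fst (hP : IsPolymorphism α β P) {g : B → E}
    (hg : AEStronglyMeasurable g β) (p : ℝ≥0∞) :
    eLpNorm (fun x => g x.2.1) p (P.withDensity fun x => ENNReal.ofReal x.2.2) = eLpNorm g p β := by
  obtain ⟨-, rfl, -⟩ := hP
  exact (eLpNorm_map_measure hg (by fun_prop)).symm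

theorem eLpNorm_mul_cpow (hP : IsPolymorphism α β P) {g : B → ℂ}
    (hg : AEStronglyMeasurable g β) {v : ℝ} (hv : 0 ≤ v) (w : ℝ) :
    eLpNorm (fun x => g x.2.1 * (x.2.2 : ℂ) ^ (v + w * Complex.I)) (ENNReal.ofReal v)⁻¹ P =
      eLpNorm g (ENNReal.ofReal v)⁻¹ β := by
  rw [eLpNorm_inv_ofReal_eq_eLpNorm_withDensity hv (by fun_prop)
    (hP.ae_pos.mono fun _ hx => (ENNReal.ofReal_pos.2 hx).ne') (hP.aestronglyMeasurable_comp_snd_fst hg),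
    hP.eLpNorm_comp_snd_fst hg]
  filter_upwards [hP.ae_pos] with x hx
  rw [enorm_mul, ← ofReal_norm, ← ofReal_norm, Complex.norm_cpow_eq_rpow_re_of_pos hx,
    ENNReal.ofReal_rpow_of_pos hx]
  simp

end IsPolymorphism

theorem polyForm_bound_general {A B : Type*} [MeasurableSpace A] [MeasurableSpace B]
    (α : Measure A) (β : Measure B)
    (P : Measure (A × B × ℝ)) (hP : IsPolymorphism α β P)
    (v w : ℝ) (hv0 : 0 ≤ v) (hv1 : v ≤ 1)
    (f : A → ℂ) (g : B → ℂ) (hf : AEStronglyMeasurable f α) (hg : AEStronglyMeasurable g β) :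
    ENNReal.ofReal ‖polyForm P (v + w * Complex.I) f g‖ ≤
      eLpNorm f (ENNReal.ofReal (1 - v))⁻¹ α * eLpNorm g (ENNReal.ofReal v)⁻¹ β := by
  have := ENNReal.holderConjugate_inv_ofReal_one_sub hv0 hv1
  let F : A × B × ℝ → ℂ := fun x => f x.1
  let G : A × B × ℝ → ℂ := fun x => g x.2.1 * (x.2.2 : ℂ) ^ (v + w * Complex.I)
  have hG : AEStronglyMeasurable G P :=
    ((hP.aestronglyMeasurable_comp_snd_fst hg).mono_ac hP.absolutelyContinuous_withDensity).mul
      (Measurable.aestronglyMeasurable (by fun_prop))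
  calc ENNReal.ofReal ‖polyForm P (v + w * Complex.I) f g‖
      ≤ eLpNorm (F • G) 1 P := by
        rw [ofReal_norm, eLpNorm_one_eq_lintegral_enorm, polyForm]
        simp only [mul_assoc]
        exact enorm_integral_le_lintegral_enorm _
    _ ≤ eLpNorm F (ENNReal.ofReal (1 - v))⁻¹ P * eLpNorm G (ENNReal.ofReal v)⁻¹ P :=
        eLpNorm_smul_le_mul_eLpNorm hG (hP.aestronglyMeasurable_comp_fst hf)
    _ = eLpNorm f (ENNReal.ofReal (1 - v))⁻¹ α * eLpNorm g (ENNReal.ofReal v)⁻¹ β := by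
        rw [hP.eLpNorm_comp_fst hf, hP.eLpNorm_mul_cpow hg hv0]

/-- Hölder estimate for the bilinear form of a polymorphism:
`|S_{v+iw}(P; f, g)| ≤ ‖f‖_{L^{1/(1-v)}(A)} · ‖g‖_{L^{1/v}(B)}`. -/
theorem polyForm_bound {A B : Type*} [MeasurableSpace A] [MeasurableSpace B]
    (α : Measure A) (β : Measure B) [IsProbabilityMeasure α] [IsProbabilityMeasure β]
    (P : Measure (A × B × ℝ)) (hP : IsPolymorphism α β P)
    (v w : ℝ) (hv0 : 0 ≤ v) (hv1 : v ≤ 1)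
    (f : A → ℂ) (g : B → ℂ) (hf : AEStronglyMeasurable f α) (hg : AEStronglyMeasurable g β) :
    ENNReal.ofReal ‖polyForm P (v + w * Complex.I) f g‖ ≤
      eLpNorm f (ENNReal.ofReal (1 - v))⁻¹ α * eLpNorm g (ENNReal.ofReal v)⁻¹ β :=
  polyForm_bound_general α β P hP v w hv0 hv1 f g hf hg
end
end

section
/- Let μ_j, μ ∈ M^▽. If the Mellin transforms converge pointwise on both boundary lines of the strip, i.e. Φ_{μ_j}(iw) → Φ_μ(iw) and Φ_{μ_j}(1+iw) → Φ_μ(1+iw) for every real w, then μ_j converges to μ in M^▽, meaning μ_j → μ weakly and t·μ_j → t·μ weakly as finite measures on ℝ₊ˣ. -/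
open MeasureTheory Set Filter Topology

noncomputable section

/-- `μ ∈ M^▽`. -/
def MemMtri (μ : Measure ℝ) : Prop :=
  μ (Set.Ioi (0:ℝ))ᶜ = 0 ∧ μ Set.univ < ⊤ ∧ (∫⁻ t, ENNReal.ofReal t ∂μ) < ⊤

/-- Mellin transform `Φ_μ(u) = ∫ t^u dμ(t)`. -/
def mellinT (μ : Measure ℝ) (u : ℂ) : ℂ := ∫ t, (t : ℂ) ^ u ∂μ

/-!
Under `t = eˢ` the Mellin transform of `μ` on the line `Re u = 0` is the characteristic function
of the push-forward of `μ` by `log`, and on the line `Re u = 1` that of the push-forward of `t·μ`.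
Lévy's continuity theorem holds for finite measures as well (the masses converge, being the values
at `w = 0`, and the normalized measures are probability measures), so both push-forwards converge
weakly. A bounded `f` continuous on `ℝ₊ˣ` is tested through the bounded continuous `f ∘ exp` on `ℝ`.
-/

open scoped NNReal BoundedContinuousFunction

namespace MeasureTheory

variable {E : Type*} [NormedAddCommGroup E] [InnerProductSpace ℝ E] [MeasurableSpace E]

lemma FiniteMeasure.charFun_normalize [Nonempty E] {μ : FiniteMeasure E} (hμ : μ ≠ 0) (t : E) :
    charFun (μ.normalize : Measure E) t = ((μ.mass⁻¹ : ℝ≥0) : ℂ) * charFun (μ : Measure E) t := by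
  rw [μ.toMeasure_normalize_eq_of_nonzero hμ, charFun_apply, charFun_apply,
    integral_smul_nnreal_measure, NNReal.smul_def, Complex.real_smul]

lemma FiniteMeasure.charFun_zero (μ : FiniteMeasure E) :
    charFun (μ : Measure E) 0 = (μ.mass : ℂ) := by
  simp [MeasureTheory.charFun_zero, Measure.real, ← FiniteMeasure.ennreal_mass]

variable [FiniteDimensional ℝ E] [BorelSpace E]

lemma FiniteMeasure.tendsto_of_tendsto_charFun {μ : ℕ → FiniteMeasure E} {μ₀ : FiniteMeasure E}
    (h : ∀ t, Tendsto (fun n ↦ charFun (μ n : Measure E) t) atTop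
      (𝓝 (charFun (μ₀ : Measure E) t))) :
    Tendsto μ atTop (𝓝 μ₀) := by
  have hmass : Tendsto (fun n ↦ (μ n).mass) atTop (𝓝 μ₀.mass) := by
    have := (Complex.continuous_re.tendsto _).comp (h 0)
    simp only [Function.comp_def, FiniteMeasure.charFun_zero, Complex.ofReal_re] at this
    exact NNReal.tendsto_coe.1 this
  obtain rfl | hμ₀ := eq_or_ne μ₀ 0
  · exact FiniteMeasure.tendsto_zero_of_tendsto_zero_mass hmass
  have hmass₀ : μ₀.mass ≠ 0 := μ₀.mass_nonzero_iff.2 hμ₀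
  have hμ_ne : ∀ᶠ n in atTop, μ n ≠ 0 :=
    (hmass.eventually_ne hmass₀).mono fun n hn ↦ (μ n).mass_nonzero_iff.1 hn
  refine FiniteMeasure.tendsto_of_tendsto_normalize_testAgainstNN_of_tendsto_mass
    (ProbabilityMeasure.tendsto_of_tendsto_charFun fun t ↦ ?_) hmass
  rw [FiniteMeasure.charFun_normalize hμ₀]
  have hinv : Tendsto (fun n ↦ (((μ n).mass⁻¹ : ℝ≥0) : ℂ)) atTop (𝓝 ((μ₀.mass⁻¹ : ℝ≥0) : ℂ)) :=
    ((Complex.continuous_ofReal.comp NNReal.continuous_coe).tendsto _).comp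
      (hmass.inv₀ hmass₀)
  refine (hinv.mul (h t)).congr' (hμ_ne.mono fun n hn ↦ ?_)
  exact (FiniteMeasure.charFun_normalize hn t).symm

lemma tendsto_integral_of_tendsto_charFun {μ : ℕ → Measure E} {μ₀ : Measure E}
    [∀ n, IsFiniteMeasure (μ n)] [IsFiniteMeasure μ₀]
    (h : ∀ t, Tendsto (fun n ↦ charFun (μ n) t) atTop (𝓝 (charFun μ₀ t))) (g : E →ᵇ ℝ) :
    Tendsto (fun n ↦ ∫ x, g x ∂μ n) atTop (𝓝 (∫ x, g x ∂μ₀)) := by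
  let ρ : ℕ → FiniteMeasure E := fun n ↦ ⟨μ n, inferInstance⟩
  let ρ₀ : FiniteMeasure E := ⟨μ₀, inferInstance⟩
  exact FiniteMeasure.tendsto_iff_forall_integral_tendsto.1
    (FiniteMeasure.tendsto_of_tendsto_charFun (μ := ρ) (μ₀ := ρ₀) h) g

end MeasureTheory

section Mellin

variable {μ : Measure ℝ}

lemma MemMtri.isFiniteMeasure (hμ : MemMtri μ) : IsFiniteMeasure μ := ⟨hμ.2.1⟩

lemma MemMtri.ae_pos (hμ : MemMtri μ) : ∀ᵐ t ∂μ, 0 < t :=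
  (measure_eq_zero_iff_ae_notMem.1 hμ.1).mono fun _ ht ↦ not_not.1 ht

lemma MemMtri.isFiniteMeasure_withDensity (hμ : MemMtri μ) :
    IsFiniteMeasure (μ.withDensity fun t ↦ ENNReal.ofReal t) :=
  MeasureTheory.isFiniteMeasure_withDensity hμ.2.2.ne

lemma mellinT_I_mul_eq_charFun_map_log (hμ : ∀ᵐ t ∂μ, 0 < t) (w : ℝ) :
    mellinT μ (Complex.I * w) = charFun (μ.map Real.log) w := by
  rw [charFun_apply_real, integral_map Real.measurable_log.aemeasurable (by fun_prop)]
  refine integral_congr_ae ?_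
  filter_upwards [hμ] with t ht
  rw [Complex.cpow_def_of_ne_zero (by exact_mod_cast ht.ne'), ← Complex.ofReal_log ht.le]
  congr 1
  ring

lemma integral_map_log_comp_exp {E : Type*} [NormedAddCommGroup E] [NormedSpace ℝ E]
    (hμ : ∀ᵐ t ∂μ, 0 < t) {f : ℝ → E} (hf : StronglyMeasurable f) :
    ∫ s, f (Real.exp s) ∂(μ.map Real.log) = ∫ t, f t ∂μ := by
  rw [integral_map_of_stronglyMeasurable (f := fun s ↦ f (Real.exp s)) Real.measurable_log
    (hf.comp_measurable Real.measurable_exp)]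
  refine integral_congr_ae ?_
  filter_upwards [hμ] with t ht
  rw [Real.exp_log ht]

lemma integral_withDensity_ofReal_id {E : Type*} [NormedAddCommGroup E] [NormedSpace ℝ E]
    (hμ : ∀ᵐ t ∂μ, 0 ≤ t) (g : ℝ → E) :
    ∫ t, g t ∂(μ.withDensity fun t ↦ ENNReal.ofReal t) = ∫ t, t • g t ∂μ := by
  rw [integral_withDensity_eq_integral_toReal_smul ENNReal.measurable_ofReal
    (ae_of_all _ fun _ ↦ ENNReal.ofReal_lt_top)]
  refine integral_congr_ae ?_
  filter_upwards [hμ] with t ht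
  rw [ENNReal.toReal_ofReal ht]

lemma mellinT_withDensity_ofReal_id (hμ : ∀ᵐ t ∂μ, 0 < t) (u : ℂ) :
    mellinT (μ.withDensity fun t ↦ ENNReal.ofReal t) u = mellinT μ (1 + u) := by
  rw [mellinT, mellinT, integral_withDensity_ofReal_id (hμ.mono fun _ ht ↦ ht.le)]
  refine integral_congr_ae ?_
  filter_upwards [hμ] with t ht
  rw [Complex.cpow_add _ _ (by exact_mod_cast ht.ne'), Complex.cpow_one, Complex.real_smul]

lemma tendsto_integral_of_tendsto_mellinT_I_mul {μ : ℕ → Measure ℝ} {ν : Measure ℝ}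
    [∀ j, IsFiniteMeasure (μ j)] [IsFiniteMeasure ν]
    (hμ : ∀ j, ∀ᵐ t ∂μ j, 0 < t) (hν : ∀ᵐ t ∂ν, 0 < t)
    (h : ∀ w : ℝ, Tendsto (fun j ↦ mellinT (μ j) (Complex.I * w)) atTop
      (𝓝 (mellinT ν (Complex.I * w))))
    {f : ℝ → ℝ} (hfm : Measurable f) (hfc : ContinuousOn f (Ioi 0)) {C : ℝ}
    (hC : ∀ t, |f t| ≤ C) :
    Tendsto (fun j ↦ ∫ t, f t ∂μ j) atTop (𝓝 (∫ t, f t ∂ν)) := by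
  have hchar (w : ℝ) : Tendsto (fun j ↦ charFun ((μ j).map Real.log) w) atTop
      (𝓝 (charFun (ν.map Real.log) w)) := by
    simpa only [mellinT_I_mul_eq_charFun_map_log (hμ _), mellinT_I_mul_eq_charFun_map_log hν]
      using h w
  let g : ℝ →ᵇ ℝ := .ofNormedAddCommGroup (f ∘ Real.exp)
    (hfc.comp_continuous Real.continuous_exp Real.exp_pos) C fun s ↦ hC _
  have := tendsto_integral_of_tendsto_charFun hchar g
  simpa only [g, BoundedContinuousFunction.coe_ofNormedAddCommGroup,
    Function.comp_apply, integral_map_log_comp_exp (hμ _) hfm.stronglyMeasurable,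
    integral_map_log_comp_exp hν hfm.stronglyMeasurable] using this

end Mellin

/-- Lévy-type continuity: if the Mellin transforms of `μ_j ∈ M^▽` converge pointwise
to that of `μ ∈ M^▽` on both boundary lines `Re u = 0` and `Re u = 1`, then `μ_j → μ`
in `M^▽`: both `μ_j → μ` and `t·μ_j → t·μ` weakly, i.e. tested against every bounded
continuous function on `ℝ₊ˣ`. -/
theorem mellinT_levy_continuity (μ : ℕ → Measure ℝ) (ν : Measure ℝ)
    (hμ : ∀ j, MemMtri (μ j)) (hν : MemMtri ν)
    (h0 : ∀ w : ℝ, Tendsto (fun j => mellinT (μ j) (Complex.I * w)) atTop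
      (𝓝 (mellinT ν (Complex.I * w))))
    (h1 : ∀ w : ℝ, Tendsto (fun j => mellinT (μ j) (1 + Complex.I * w)) atTop
      (𝓝 (mellinT ν (1 + Complex.I * w)))) :
    ∀ f : ℝ → ℝ, Measurable f → ContinuousOn f (Set.Ioi 0) → (∃ C, ∀ t, |f t| ≤ C) →
      Tendsto (fun j => ∫ t, f t ∂(μ j)) atTop (𝓝 (∫ t, f t ∂ν)) ∧
      Tendsto (fun j => ∫ t, t * f t ∂(μ j)) atTop (𝓝 (∫ t, t * f t ∂ν)) := by
  rintro f hfm hfc ⟨C, hC⟩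
  have := fun j ↦ (hμ j).isFiniteMeasure
  have := fun j ↦ (hμ j).isFiniteMeasure_withDensity
  have := hν.isFiniteMeasure
  have := hν.isFiniteMeasure_withDensity
  refine ⟨tendsto_integral_of_tendsto_mellinT_I_mul (fun j ↦ (hμ j).ae_pos) hν.ae_pos h0
    hfm hfc hC, ?_⟩
  have h_tμ := tendsto_integral_of_tendsto_mellinT_I_mul
    (μ := fun j ↦ (μ j).withDensity fun t ↦ ENNReal.ofReal t)
    (ν := ν.withDensity fun t ↦ ENNReal.ofReal t)
    (fun j ↦ (withDensity_absolutelyContinuous _ _).ae_le (hμ j).ae_pos)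
    ((withDensity_absolutelyContinuous _ _).ae_le hν.ae_pos)
    (fun w ↦ by simpa only [mellinT_withDensity_ofReal_id (hμ _).ae_pos,
      mellinT_withDensity_ofReal_id hν.ae_pos] using h1 w) hfm hfc hC
  rw [integral_withDensity_ofReal_id (hν.ae_pos.mono fun _ ht ↦ ht.le)] at h_tμ
  exact h_tμ.congr fun j ↦ integral_withDensity_ofReal_id ((hμ j).ae_pos.mono fun _ ht ↦ ht.le) f
end
end
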